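/- arXiv:1612.03106 — 4 statements merged into one kernel-verified Lean document; each statement's English description precedes it below -/
import Mathlib

section
/- Let a Polish group G act continuously on a Polish space Y. Then there are at most countably many non-meager orbits, and every orbit that is both dense and non-meager is comeager. -/
/-!
Orbits are continuous images of the Polish group, hence analytic, hence have the Baire property
(Lusin–Sierpiński). A non-meagre set with the Baire property is comeagre in some nonempty basic
open set; distinct orbits are disjoint, so they get distinct basic open sets, and there are only
countably many of those. If the orbit `O` is moreover dense and comeagre in the open set `U`,
then `O` is comeagre in the dense open set `⋃ g, g • U`, which is the union of the translates of
`U` by a countable dense subset of `G`.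
-/

open Filter Topology Set TopologicalSpace
open scoped Pointwise

theorem eq_of_forall_mem_closure_of_mem_nhds {Y : Type*} [TopologicalSpace Y] [T2Space Y]
    {y z : Y} (h : ∀ s ∈ 𝓝 z, y ∈ closure s) : y = z := by
  by_contra hne
  obtain ⟨U, hU, V, hV, hUV⟩ := Filter.disjoint_iff.1 (disjoint_nhds_nhds.2 hne)
  exact (mem_closure_iff_nhds.1 (h V hV) U hU).not_disjoint hUV

section BaireProperty

variable {Y : Type*} [TopologicalSpace Y]

theorem isMeagre_diff_of_residualEq {s t : Set Y} (h : s =ᵇ t) : IsMeagre (s \ t) := by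
  filter_upwards [h.mem_iff] with x hx
  simp [hx]

theorem BaireMeasurableSet.exists_mem_basis_isMeagre_diff {B : Set (Set Y)}
    (hB : IsTopologicalBasis B) {s : Set Y} (hs : BaireMeasurableSet s) (hs' : ¬IsMeagre s) :
    ∃ U ∈ B, U.Nonempty ∧ IsMeagre (U \ s) := by
  obtain ⟨U, hU, hsU⟩ := hs.residualEq_isOpen
  obtain ⟨x, hx⟩ : U.Nonempty := nonempty_iff_ne_empty.2 fun hU₀ => hs' <| by
    simpa [hU₀] using isMeagre_diff_of_residualEq hsU
  obtain ⟨V, hVB, hxV, hVU⟩ := hB.exists_subset_of_mem_open hx hU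
  exact ⟨V, hVB, ⟨x, hxV⟩,
    (isMeagre_diff_of_residualEq hsU.symm).mono (sdiff_subset_sdiff_left hVU)⟩

theorem exists_baireMeasurableSet_superset [SecondCountableTopology Y] (S : Set Y) :
    ∃ H, S ⊆ H ∧ BaireMeasurableSet H ∧
      ∀ Z, BaireMeasurableSet Z → S ⊆ Z → IsMeagre (H \ Z) := by
  obtain ⟨B, hBc, -, hB⟩ := exists_countable_basis Y
  set W := ⋃ U ∈ {U ∈ B | IsMeagre (U ∩ S)}, U
  have hW : IsOpen W := isOpen_biUnion fun U hU => hB.isOpen hU.1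
  have hSW : IsMeagre (W ∩ S) := by
    rw [iUnion₂_inter]
    exact isMeagre_biUnion (hBc.mono (sep_subset _ _)) fun U hU => hU.2
  refine ⟨S ∪ Wᶜ, subset_union_left, hW.baireMeasurableSet.compl.congr ?_, ?_⟩
  · filter_upwards [hSW] with x hx
    simp only [mem_compl_iff, mem_inter_iff, not_and] at hx
    exact propext ⟨Or.inr, fun h => h.elim (fun hxS hxW => hx hxW hxS) id⟩
  intro Z hZ hSZ
  obtain ⟨V, hV, hTV⟩ := (hW.baireMeasurableSet.compl.diff hZ).residualEq_isOpen
  have hVT := isMeagre_diff_of_residualEq hTV.symm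
  have hV : IsMeagre V := by
    rw [hB.open_eq_sUnion' hV, sUnion_eq_biUnion]
    refine isMeagre_biUnion (hBc.mono (sep_subset _ _)) fun U ⟨hUB, hUV⟩ => hVT.mono ?_
    have hUS : IsMeagre (U ∩ S) := hVT.mono fun x (hx : x ∈ U ∩ S) =>
      (⟨hUV hx.1, fun hxT => hxT.2 (hSZ hx.2)⟩ : x ∈ V \ (Wᶜ \ Z))
    have hUW : U ⊆ W := subset_biUnion_of_mem (u := fun U => U)
      (show U ∈ {U ∈ B | IsMeagre (U ∩ S)} from ⟨hUB, hUS⟩)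
    exact fun x hx => (⟨hUV hx, fun hxT => hxT.1 (hUW hx)⟩ : x ∈ V \ (Wᶜ \ Z))
  refine ((isMeagre_diff_of_residualEq hTV).union hV).mono fun x ⟨hxH, hxZ⟩ => ?_
  have hxW : x ∈ Wᶜ := hxH.resolve_left fun hxS => hxZ (hSZ hxS)
  by_cases hxV : x ∈ V
  · exact Or.inr hxV
  · exact Or.inl ⟨⟨hxW, hxZ⟩, hxV⟩

end BaireProperty

namespace PiNat

theorem exists_cylinder_subset_of_mem_nhds {E : ℕ → Type*} [∀ n, TopologicalSpace (E n)]
    [∀ n, DiscreteTopology (E n)] {x : ∀ n, E n} {U : Set (∀ n, E n)} (hU : U ∈ 𝓝 x) :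
    ∃ n, cylinder x n ⊆ U := by
  obtain ⟨_, ⟨z, n, rfl⟩, hx, hsub⟩ := (isTopologicalBasis_cylinders E).mem_nhds_iff.1 hU
  exact ⟨n, mem_cylinder_iff_eq.1 hx ▸ hsub⟩

/-- The list `l` holds the first `l.length` terms in reverse order, as `PiNat.res` does. -/
def listCylinder (l : List ℕ) : Set (ℕ → ℕ) := {x | res x l.length = l}

theorem listCylinder_nil : listCylinder [] = univ := by
  simp [listCylinder]

theorem listCylinder_eq_iUnion_cons (l : List ℕ) :
    listCylinder l = ⋃ n, listCylinder (n :: l) := by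
  ext x
  simp [listCylinder]

theorem listCylinder_res (x : ℕ → ℕ) (n : ℕ) : listCylinder (res x n) = cylinder x n := by
  simp [listCylinder, cylinder_eq_res]

theorem exists_forall_res {p : List ℕ → Prop} (h₀ : p [])
    (hstep : ∀ l, p l → ∃ n, p (n :: l)) : ∃ x : ℕ → ℕ, ∀ k, p (res x k) := by
  choose! next hnext using hstep
  let branch : ℕ → List ℕ := fun k => Nat.rec [] (fun _ l => next l :: l) k
  have hbranch : ∀ k, p (branch k) := fun k => Nat.rec h₀ (fun _ ih => hnext _ ih) k
  have hres : ∀ k, res (fun i => next (branch i)) k = branch k := by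
    intro k
    induction k with
    | zero => rfl
    | succ k ih => rw [res_succ, ih]
  exact ⟨fun i => next (branch i), fun k => hres k ▸ hbranch k⟩

end PiNat

open PiNat in
/-- **Lusin–Sierpiński.** Take Baire hulls `K l` of the Suslin scheme `l ↦ f '' listCylinder l`,
cut down to the closures. Off the meagre set of points lying in some `K l` but in no
`K (n :: l)`, every point of `K []` lies in `K (res x k)` for all `k` along some branch `x`, and
is then `f x`. -/
theorem MeasureTheory.AnalyticSet.baireMeasurableSet {Y : Type*} [TopologicalSpace Y]
    [T2Space Y] [SecondCountableTopology Y] {s : Set Y} (hs : AnalyticSet s) :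
    BaireMeasurableSet s := by
  rw [AnalyticSet] at hs
  obtain rfl | ⟨f, hf, rfl⟩ := hs
  · exact isOpen_empty.baireMeasurableSet
  set A : List ℕ → Set Y := fun l => f '' listCylinder l
  choose H hAH hH hHmin using fun l => exists_baireMeasurableSet_superset (A l)
  set K : List ℕ → Set Y := fun l => H l ∩ closure (A l)
  have hK : ∀ l, BaireMeasurableSet (K l) := fun l =>
    (hH l).inter isClosed_closure.isOpen_compl.baireMeasurableSet.of_compl
  have hAK : ∀ l, A l ⊆ K l := fun l => subset_inter (hAH l) subset_closure
  set M := ⋃ l, K l \ ⋃ n, K (n :: l)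
  have hM : IsMeagre M := by
    refine isMeagre_iUnion fun l => (hHmin l _ (.iUnion fun n => hK _) ?_).mono
      (sdiff_subset_sdiff_left inter_subset_left)
    have hA : A l = ⋃ n, A (n :: l) := by
      simp only [A]
      rw [listCylinder_eq_iUnion_cons, image_iUnion]
    exact hA.subset.trans (iUnion_mono fun n => hAK _)
  have hKM : K [] \ range f ⊆ M := by
    rintro y ⟨hy, hyf⟩
    by_contra hyM
    apply hyf
    obtain ⟨x, hx⟩ := exists_forall_res (p := fun l => y ∈ K l) hy fun l hl => by
      by_contra! h
      exact hyM (mem_iUnion.2 ⟨l, hl, by simpa using h⟩)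
    refine ⟨x, (eq_of_forall_mem_closure_of_mem_nhds fun U hU => ?_).symm⟩
    obtain ⟨k, hk⟩ := exists_cylinder_subset_of_mem_nhds (hf.continuousAt hU)
    refine closure_mono ?_ (hx k).2
    simpa only [A, listCylinder_res] using image_subset_iff.2 hk
  have hfK : range f ⊆ K [] := by
    simpa [A, listCylinder_nil] using hAK []
  rw [← sdiff_sdiff_cancel_left hfK]
  exact (hK []).diff (hM.mono hKM).baireMeasurableSet

theorem Set.PairwiseDisjoint.countable_of_not_isMeagre {Y : Type*} [TopologicalSpace Y]
    [SecondCountableTopology Y] [BaireSpace Y] {𝒮 : Set (Set Y)}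
    (hd : 𝒮.PairwiseDisjoint id) (hBP : ∀ s ∈ 𝒮, BaireMeasurableSet s)
    (hm : ∀ s ∈ 𝒮, ¬IsMeagre s) : 𝒮.Countable := by
  obtain ⟨B, hBc, -, hB⟩ := exists_countable_basis Y
  choose! U hUB hUne hUs using
    fun s hs => (hBP s hs).exists_mem_basis_isMeagre_diff hB (hm s hs)
  refine MapsTo.countable_of_injOn hUB (fun s hs t ht hst => ?_) hBc
  by_contra hne
  refine not_isMeagre_of_isOpen (hB.isOpen (hUB s hs)) (hUne s hs) <|
    ((hUs s hs).union (hst ▸ hUs t ht)).mono fun x hx => ?_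
  by_cases hxs : x ∈ s
  · exact Or.inr ⟨hst ▸ hx, Set.disjoint_left.1 (hd hs ht hne) hxs⟩
  · exact Or.inl ⟨hx, hxs⟩

section GroupAction

variable {G Y : Type*} [Group G] [TopologicalSpace Y] [MulAction G Y]

theorem IsMeagre.smul [ContinuousConstSMul G Y] {s : Set Y} (hs : IsMeagre s) (g : G) :
    IsMeagre (g • s) := by
  rw [← preimage_smul_inv]
  exact hs.preimage_of_isOpenMap (continuous_const_smul _) (isOpenMap_smul _)

theorem Dense.biUnion_smul_eq_iUnion_smul [TopologicalSpace G] [ContinuousInv G]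
    [ContinuousSMul G Y] {D : Set G} (hD : Dense D) {U : Set Y} (hU : IsOpen U) :
    ⋃ d ∈ D, d • U = ⋃ g : G, g • U := by
  refine subset_antisymm (iUnion₂_subset fun d _ => subset_iUnion (fun g : G => g • U) d) ?_
  refine iUnion_subset fun g => ?_
  rintro _ ⟨u, hu, rfl⟩
  have hW : IsOpen {h : G | h⁻¹ • g • u ∈ U} :=
    hU.preimage (continuous_inv.smul continuous_const)
  obtain ⟨d, hdW, hdD⟩ := hD.inter_open_nonempty _ hW ⟨g, by simpa using hu⟩
  exact mem_biUnion hdD ⟨d⁻¹ • g • u, hdW, smul_inv_smul d _⟩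

theorem mem_residual_of_smul_subset_of_dense_orbit [TopologicalSpace G] [ContinuousInv G]
    [ContinuousSMul G Y] [SeparableSpace G] {s : Set Y} (hinv : ∀ g : G, g • s ⊆ s)
    (hs : BaireMeasurableSet s) (hm : ¬IsMeagre s) {y : Y} (hy : Dense (MulAction.orbit G y)) :
    s ∈ residual Y := by
  obtain ⟨U, hU, hUne, hUs⟩ := hs.exists_mem_basis_isMeagre_diff isTopologicalBasis_opens hm
  set V := ⋃ g : G, g • U with hV
  have hVo : IsOpen V := isOpen_iUnion fun g => hU.smul g
  have hVd : Dense V := by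
    obtain ⟨_, hgU, g, rfl⟩ := hy.inter_open_nonempty U hU hUne
    refine hy.mono ?_
    rintro _ ⟨h, rfl⟩
    exact mem_iUnion.2 ⟨h * g⁻¹, g • y, hgU, by simp [mul_smul]⟩
  obtain ⟨D, hDc, hD⟩ := exists_countable_dense G
  have hVs : IsMeagre (V \ s) := by
    refine (isMeagre_biUnion hDc fun d _ => hUs.smul d).mono ?_
    rintro _ ⟨hx, hxs⟩
    rw [hV, ← hD.biUnion_smul_eq_iUnion_smul hU] at hx
    obtain ⟨d, hd, u, hu, rfl⟩ := mem_iUnion₂.1 hx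
    exact mem_biUnion hd ⟨u, ⟨hu, fun hus => hxs (hinv d ⟨u, hus, rfl⟩)⟩, rfl⟩
  have hVc : IsMeagre Vᶜ := by
    rw [IsMeagre, compl_compl]
    exact residual_of_dense_open hVo hVd
  have hsc : IsMeagre sᶜ := (hVs.union hVc).mono fun x hx => (em (x ∈ V)).imp (⟨·, hx⟩) id
  rwa [IsMeagre, compl_compl] at hsc

end GroupAction

/-- For a continuous action of a Polish group `G` on a Polish space `Y`:
there are at most countably many non-meager orbits, and every dense non-meager orbit
is comeager. -/
theorem stmt0 {G Y : Type} [Group G] [TopologicalSpace G] [IsTopologicalGroup G]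
    [PolishSpace G] [TopologicalSpace Y] [PolishSpace Y]
    [MulAction G Y] [ContinuousSMul G Y] :
    Set.Countable {O : Set Y | (∃ y : Y, O = MulAction.orbit G y) ∧ ¬ IsMeagre O} ∧
    ∀ y : Y, Dense (MulAction.orbit G y) → ¬ IsMeagre (MulAction.orbit G y) →
      MulAction.orbit G y ∈ residual Y := by
  have horbit (y : Y) : BaireMeasurableSet (MulAction.orbit G y) :=
    (MeasureTheory.analyticSet_range_of_polishSpace
      (continuous_id.smul continuous_const)).baireMeasurableSet
  refine ⟨Set.PairwiseDisjoint.countable_of_not_isMeagre ?_ ?_ fun O hO => hO.2,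
    fun y hd hm => mem_residual_of_smul_subset_of_dense_orbit
      (fun g => (MulAction.smul_orbit g y).subset) (horbit y) hm hd⟩
  · exact MulAction.orbit.pairwiseDisjoint.subset fun O ⟨⟨y, hy⟩, _⟩ => ⟨y, hy.symm⟩
  · rintro O ⟨⟨y, rfl⟩, -⟩
    exact horbit y
end

section
/- Let Y be a Polish G-space for a Polish group G, and let U ⊆ G be open. Then the map from Y to F(Y) sending y to the closure of U·y = {g·y : g ∈ U} is Borel. -/
/-! The map `y ↦ closure (U • y)` is lower semicontinuous: its value meets an open `V` iff
`g • y ∈ V` for some `g ∈ U`, an open condition on `y`, and the Effros structure is generated by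
exactly these conditions. -/

/-- The Effros Borel structure on the space of closed subsets of `Y`, generated by the
sets `{F : F ∩ U ≠ ∅}` for `U` open. -/
def effrosSpace (Y : Type) [TopologicalSpace Y] : MeasurableSpace {F : Set Y // IsClosed F} :=
  MeasurableSpace.generateFrom
    {A | ∃ U : Set Y, IsOpen U ∧ A = {F : {F : Set Y // IsClosed F} | ((F : Set Y) ∩ U).Nonempty}}

theorem measurable_effrosSpace {X Y : Type} [MeasurableSpace X] [TopologicalSpace Y]
    {Φ : X → {F : Set Y // IsClosed F}}
    (h : ∀ V : Set Y, IsOpen V → MeasurableSet {x | ((Φ x : Set Y) ∩ V).Nonempty}) :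
    @Measurable X _ _ (effrosSpace Y) Φ := by
  refine @measurable_generateFrom _ _ _ _ Φ ?_
  rintro A ⟨V, hV, rfl⟩
  exact h V hV

theorem isOpen_setOf_closure_image_inter_nonempty {ι Y Z : Type*} [TopologicalSpace Y]
    [TopologicalSpace Z] {f : ι → Y → Z} (hf : ∀ i, Continuous (f i)) (U : Set ι)
    {V : Set Z} (hV : IsOpen V) :
    IsOpen {y | (closure ((fun i => f i y) '' U) ∩ V).Nonempty} := by
  have hpre : {y | (closure ((fun i => f i y) '' U) ∩ V).Nonempty} = ⋃ i ∈ U, f i ⁻¹' V := by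
    ext y
    simp only [Set.mem_ofPred_eq, closure_inter_open_nonempty_iff hV,
      Set.image_inter_nonempty_iff, Set.mem_iUnion, exists_prop]
    rfl
  rw [hpre]
  exact isOpen_biUnion fun i _ => hV.preimage (hf i)

theorem stmt2_general {G Y : Type} [Group G] [TopologicalSpace G]
    [TopologicalSpace Y] [MulAction G Y] [ContinuousSMul G Y]
    [MeasurableSpace Y] [BorelSpace Y]
    (U : Set G) :
    @Measurable Y {F : Set Y // IsClosed F} _ (effrosSpace Y)
      (fun y => ⟨closure ((fun g : G => g • y) '' U), isClosed_closure⟩) :=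
  measurable_effrosSpace fun _ hV =>
    (isOpen_setOf_closure_image_inter_nonempty (continuous_const_smul ·) U hV).measurableSet

/-- For a Polish `G`-space `Y` and open `U ⊆ G`, the map `y ↦ closure (U ⬝ y)` is Borel
from `Y` to the Effros Borel space of closed subsets of `Y`. -/
theorem stmt2 {G Y : Type} [Group G] [TopologicalSpace G] [IsTopologicalGroup G] [PolishSpace G]
    [TopologicalSpace Y] [PolishSpace Y] [MulAction G Y] [ContinuousSMul G Y]
    [MeasurableSpace Y] [BorelSpace Y]
    (U : Set G) (hU : IsOpen U) :
    @Measurable Y {F : Set Y // IsClosed F} _ (effrosSpace Y)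
      (fun y => ⟨closure ((fun g : G => g • y) '' U), isClosed_closure⟩) :=
  stmt2_general U
end

section
/- Let G be a Polish group, n ≥ 2, and let (u_k) be a sequence of reduced words in the free group F_n on generators s_1,…,s_n. For every n-tuple f̄ = (f_1,…,f_n) in G such that the subgroup ⟨f̄⟩ generated by f̄ is non-discrete in G, there exists a sequence of reduced words w_k = v_k u_k (each w_k reduced and ending in u_k) such that w_k(f̄) → e in G. -/
/-!
Pick a generator `s_i` other than the first letter of `u`. Non-discreteness yields nontrivial
words `w` with `w(f̄)` arbitrarily close to `e`, and conjugating `w` by `1` or `s_i^{±1}` makes its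
reduced word begin and end with `s_i^{±1}`. Then `v = u⁻¹ (c w c⁻¹)` makes `v u = u⁻¹ (c w c⁻¹) u`
reduced as written, and `(v u)(f̄)` is the conjugate of `w(f̄)` by one of three fixed elements of
`G`, hence is small once `w(f̄)` is small enough.
-/

open Filter Topology

theorem Subgroup.exists_ne_one_mem_of_not_discreteTopology {G : Type*} [Group G]
    [TopologicalSpace G] [IsTopologicalGroup G] {H : Subgroup G} (hH : ¬DiscreteTopology H)
    {U : Set G} (hU : U ∈ 𝓝 1) : ∃ g ∈ H, g ≠ 1 ∧ g ∈ U := by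
  by_contra! h
  refine hH (discreteTopology_iff_isOpen_singleton_one.2 ?_)
  have : ({1} : Set H) = Subtype.val ⁻¹' interior U := by
    ext ⟨g, hg⟩
    refine ⟨fun hg1 => ?_, fun hgU => ?_⟩
    · obtain rfl : g = 1 := congrArg Subtype.val hg1
      exact mem_interior_iff_mem_nhds.2 hU
    · by_contra hne
      exact h g hg (fun h1 => hne (Subtype.ext h1)) (interior_subset hgU)
  rw [this]
  exact isOpen_interior.preimage continuous_subtype_val

theorem eventually_forall_conj_mem {G : Type*} [Group G] [TopologicalSpace G] [ContinuousMul G]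
    {S : Set G} (hS : S.Finite) {U : Set G} (hU : U ∈ 𝓝 1) :
    ∀ᶠ g in 𝓝 1, ∀ x ∈ S, x * g * x⁻¹ ∈ U :=
  hS.eventually_all.2 fun x _ =>
    ((continuous_const_mul x).mul continuous_const).tendsto' 1 1 (by simp) hU

namespace FreeGroup

variable {α : Type*}

theorem exists_lift_mem_of_not_discreteTopology {G : Type*} [Group G] [TopologicalSpace G]
    [IsTopologicalGroup G] {f : α → G} (hf : ¬DiscreteTopology (Subgroup.closure (Set.range f)))
    {U : Set G} (hU : U ∈ 𝓝 1) : ∃ w : FreeGroup α, w ≠ 1 ∧ lift f w ∈ U := by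
  rw [← range_lift_eq_closure] at hf
  obtain ⟨_, ⟨w, rfl⟩, hne, hwU⟩ := Subgroup.exists_ne_one_mem_of_not_discreteTopology hf hU
  exact ⟨w, fun h => hne (by simp [h]), hwU⟩

theorem isReduced_append {L₁ L₂ : List (α × Bool)} (h₁ : IsReduced L₁) (h₂ : IsReduced L₂)
    (h : ∀ a ∈ L₁.getLast?, ∀ b ∈ L₂.head?, a.1 = b.1 → a.2 = b.2) :
    IsReduced (L₁ ++ L₂) :=
  List.isChain_append.2 ⟨h₁, h₂, h⟩

variable [DecidableEq α]

theorem toWord_mul_of_isReduced {x y : FreeGroup α} (h : IsReduced (x.toWord ++ y.toWord)) :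
    (x * y).toWord = x.toWord ++ y.toWord := by
  rw [toWord_mul, h.reduce_eq]

theorem toWord_mul_of_fst_ne {x y : FreeGroup α}
    (h : ∀ a ∈ x.toWord.getLast?, ∀ b ∈ y.toWord.head?, a.1 ≠ b.1) :
    (x * y).toWord = x.toWord ++ y.toWord :=
  toWord_mul_of_isReduced <| isReduced_append isReduced_toWord isReduced_toWord
    fun a ha b hb hab => absurd hab (h a ha b hb)

theorem getLast?_toWord_inv (x : FreeGroup α) :
    x⁻¹.toWord.getLast? = x.toWord.head?.map fun a => (a.1, !a.2) := by
  simp [toWord_inv, invRev, List.getLast?_reverse]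

theorem exists_conj_toWord_fst_eq (i : α) {w : FreeGroup α} (hw : w ≠ 1) :
    ∃ c ∈ ({1, of i, (of i)⁻¹} : Set (FreeGroup α)),
      (∀ a ∈ (c * w * c⁻¹).toWord.head?, a.1 = i) ∧
        ∀ a ∈ (c * w * c⁻¹).toWord.getLast?, a.1 = i := by
  have hne : w.toWord ≠ [] := by simpa using hw
  obtain ⟨a, ha⟩ := Option.ne_none_iff_exists'.1 (List.head?_eq_none_iff.not.2 hne)
  obtain ⟨b, hb⟩ := Option.ne_none_iff_exists'.1 (List.getLast?_eq_none_iff.not.2 hne)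
  by_cases hab : a.1 = i ∧ b.1 = i
  · exact ⟨1, by simp, by simp [ha, hab.1], by simp [hb, hab.2]⟩
  obtain ⟨ε, hεa, hεb⟩ : ∃ ε : Bool, (a.1 = i → ε = a.2) ∧ (b.1 = i → b.2 = !ε) := by
    by_cases hai : a.1 = i
    · exact ⟨a.2, fun _ => rfl, fun hbi => absurd ⟨hai, hbi⟩ hab⟩
    · exact ⟨!b.2, fun h => absurd h hai, fun _ => by simp⟩
  set c := mk [(i, ε)]
  have hleft : IsReduced ((i, ε) :: w.toWord) := by
    refine List.isChain_cons.2 ⟨?_, isReduced_toWord⟩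
    simp only [ha, Option.mem_def, Option.some.injEq]
    rintro _ rfl h
    exact hεa h.symm
  have hcw : (c * w).toWord = (i, ε) :: w.toWord := toWord_mul_of_isReduced hleft
  have hc : c⁻¹.toWord = [(i, !ε)] := by simp [c, inv_mk, invRev]
  have hred : IsReduced ((i, ε) :: w.toWord ++ [(i, !ε)]) := by
    refine isReduced_append hleft .singleton ?_
    simp only [List.getLast?_cons, hb, Option.getD_some, Option.mem_def, Option.some.injEq,
      List.head?_cons]
    rintro _ rfl _ rfl
    exact hεb
  have hcwc : (c * w * c⁻¹).toWord = (i, ε) :: w.toWord ++ [(i, !ε)] := by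
    rw [toWord_mul_of_isReduced (by rwa [hcw, hc]), hcw, hc]
  refine ⟨c, ?_, by simp [hcwc], by rw [hcwc, List.getLast?_concat]; simp⟩
  cases ε <;> simp [c, of, inv_mk, invRev]

theorem toWord_inv_mul_mul_eq_append {t w : FreeGroup α} {i : α} (hw : w ≠ 1)
    (hw_head : ∀ a ∈ w.toWord.head?, a.1 = i) (hw_last : ∀ a ∈ w.toWord.getLast?, a.1 = i)
    (ht : ∀ a ∈ t.toWord.head?, a.1 ≠ i) :
    (t⁻¹ * w * t).toWord = (t⁻¹ * w).toWord ++ t.toWord := by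
  have hleft : (t⁻¹ * w).toWord = t⁻¹.toWord ++ w.toWord := toWord_mul_of_fst_ne <| by
    simp only [getLast?_toWord_inv, Option.mem_map]
    rintro _ ⟨a, ha, rfl⟩ b hb
    exact (ht a ha).trans_eq (hw_head b hb).symm
  refine toWord_mul_of_fst_ne ?_
  rw [hleft, List.getLast?_append_of_ne_nil _ (by simpa using hw)]
  exact fun a ha b hb => (hw_last a ha).trans_ne (ht b hb).symm

theorem exists_toWord_mul_eq_append_lift_mem [Nontrivial α] {G : Type*} [Group G]
    [TopologicalSpace G] [IsTopologicalGroup G] {f : α → G}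
    (hf : ¬DiscreteTopology (Subgroup.closure (Set.range f))) (t : FreeGroup α) {U : Set G}
    (hU : U ∈ 𝓝 1) : ∃ v, (v * t).toWord = v.toWord ++ t.toWord ∧ lift f (v * t) ∈ U := by
  obtain ⟨i, hi⟩ : ∃ i, ∀ a ∈ t.toWord.head?, a.1 ≠ i := by
    rcases t.toWord.head? with _ | a
    · exact ⟨Classical.arbitrary α, by simp⟩
    · obtain ⟨i, hi⟩ := exists_ne a.1
      exact ⟨i, by simpa using hi.symm⟩
  set C : Set (FreeGroup α) := {1, of i, (of i)⁻¹}
  have hV := eventually_forall_conj_mem (C.toFinite.image fun c => (lift f t)⁻¹ * lift f c) hU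
  obtain ⟨w, hw, hwV⟩ := exists_lift_mem_of_not_discreteTopology hf hV
  obtain ⟨c, hcC, hhead, hlast⟩ := exists_conj_toWord_fst_eq i hw
  refine ⟨t⁻¹ * (c * w * c⁻¹), toWord_inv_mul_mul_eq_append (by simpa using hw) hhead hlast hi, ?_⟩
  simpa [mul_assoc] using hwV _ ⟨c, hcC, rfl⟩

end FreeGroup

/-- For a Polish group `G`, `n ≥ 2`, a sequence `(u_k)` of (reduced) words in the free group
`F_n`, and a tuple `f̄` generating a non-discrete subgroup, there are words `v_k` such that
each product `w_k = v_k * u_k` is reduced as a concatenation (it ends with `u_k`) and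
`w_k(f̄) → e`. -/
theorem stmt11 {G : Type} [Group G] [TopologicalSpace G] [IsTopologicalGroup G] [PolishSpace G]
    (n : ℕ) (hn : 2 ≤ n) (u : ℕ → FreeGroup (Fin n)) (f : Fin n → G)
    (hf : ¬ DiscreteTopology (Subgroup.closure (Set.range f))) :
    ∃ v : ℕ → FreeGroup (Fin n),
      (∀ k, (v k * u k).toWord = (v k).toWord ++ (u k).toWord) ∧
      Tendsto (fun k => FreeGroup.lift f (v k * u k)) atTop (nhds 1) := by
  have : Nontrivial (Fin n) := Fin.nontrivial_iff_two_le.2 hn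
  obtain ⟨B, hB⟩ := (𝓝 (1 : G)).exists_antitone_basis
  choose v hv_word hv_mem using fun k =>
    FreeGroup.exists_toWord_mul_eq_append_lift_mem hf (u k) (hB.mem k)
  exact ⟨v, hv_word, hB.tendsto hv_mem⟩
end

section
/- Let G be a non-archimedean Polish group. Then for every g ∈ G, the cyclic subgroup ⟨g⟩ is either discrete or precompact (totally bounded) in G. -/
open Topology
open scoped Pointwise

/-!
If some open subgroup `U` meets `⟨g⟩` only in `1`, then `{1}` is open in `⟨g⟩`, so `⟨g⟩` is
discrete. Otherwise every open subgroup `U` contains some `g ^ n` with `n ≠ 0`, and then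
`⟨g⟩ ⊆ U * {1, g, …, g ^ (|n| - 1)}` by division with remainder; since the open subgroups form
a neighbourhood basis of `1`, these finite covers witness total boundedness.
-/

section

variable {G : Type*} [Group G]

lemma Subgroup.zpowers_subset_zpowers_pow_mul_image_Ico (g : G) {n : ℤ} (hn : n ≠ 0) :
    (zpowers g : Set G) ⊆ (zpowers (g ^ n) : Set G) * (g ^ ·) '' Set.Ico 0 |n| := by
  rintro _ ⟨k, rfl⟩
  refine ⟨(g ^ n) ^ (k / n), ⟨k / n, rfl⟩, g ^ (k % n),
    ⟨k % n, ⟨Int.emod_nonneg k hn, Int.emod_lt_abs k hn⟩, rfl⟩, ?_⟩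
  simp only [← zpow_mul, ← zpow_add, Int.mul_ediv_add_emod]

variable [TopologicalSpace G] [IsTopologicalGroup G]

lemma Subgroup.discreteTopology_of_inf_eq_bot {H U : Subgroup G} (hU : IsOpen (U : Set G))
    (hHU : H ⊓ U = ⊥) : DiscreteTopology H := by
  rw [discreteTopology_iff_isOpen_singleton_one]
  convert hU.preimage continuous_subtype_val
  ext ⟨x, hxH⟩
  simp only [Set.mem_singleton_iff, Set.mem_preimage, SetLike.mem_coe, Subgroup.mk_eq_one]
  refine ⟨fun hx => hx ▸ U.one_mem, fun hxU => ?_⟩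
  simpa [hHU] using Subgroup.mem_inf.mpr ⟨hxH, hxU⟩

lemma totallyBounded_of_forall_openSubgroup_subset_mul_finite
    (hG : (𝓝 (1 : G)).HasBasis (fun U : Subgroup G => IsOpen (U : Set G))
      (fun U : Subgroup G => (U : Set G)))
    {s : Set G} (hs : ∀ U : Subgroup G, IsOpen (U : Set G) →
      ∃ t : Set G, t.Finite ∧ s ⊆ (U : Set G) * t) :
    @TotallyBounded G (IsTopologicalGroup.rightUniformSpace G) s := by
  let := IsTopologicalGroup.rightUniformSpace G
  intro d hd
  obtain ⟨V, hV, hVd⟩ := hd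
  obtain ⟨U, hU, hUV⟩ := hG.mem_iff.mp hV
  obtain ⟨t, ht, hst⟩ := hs U hU
  refine ⟨t, ht, fun x hx => ?_⟩
  obtain ⟨u, hu, y, hy, rfl⟩ := hst hx
  refine Set.mem_iUnion₂.mpr ⟨y, hy, hVd (hUV ?_)⟩
  simpa using U.inv_mem hu

end

theorem stmt13_general {G : Type} [Group G] [TopologicalSpace G] [IsTopologicalGroup G]
    (hna : (nhds (1 : G)).HasBasis (fun U : Subgroup G => IsOpen (U : Set G))
      (fun U : Subgroup G => (U : Set G)))
    (g : G) :
    DiscreteTopology (Subgroup.zpowers g) ∨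
      @TotallyBounded G (IsTopologicalGroup.rightUniformSpace G)
        (Subgroup.zpowers g : Set G) := by
  by_cases h : ∃ U : Subgroup G, IsOpen (U : Set G) ∧ Subgroup.zpowers g ⊓ U = ⊥
  · obtain ⟨U, hU, hgU⟩ := h
    exact .inl (Subgroup.discreteTopology_of_inf_eq_bot hU hgU)
  refine .inr (totallyBounded_of_forall_openSubgroup_subset_mul_finite hna fun U hU => ?_)
  obtain ⟨⟨_, hx⟩, hx1⟩ := Subgroup.ne_bot_iff_exists_ne_one.mp fun hbot => h ⟨U, hU, hbot⟩
  obtain ⟨⟨n, rfl⟩, hnU⟩ := Subgroup.mem_inf.mp hx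
  have hn : n ≠ 0 := by rintro rfl; simp at hx1
  exact ⟨_, (Set.finite_Ico 0 |n|).image _,
    (Subgroup.zpowers_subset_zpowers_pow_mul_image_Ico g hn).trans
      (Set.mul_subset_mul_right (Subgroup.zpowers_le.mpr hnU))⟩

/-- In a non-archimedean Polish group (one with a neighborhood basis at the identity
consisting of open subgroups), every cyclic subgroup `⟨g⟩` is either discrete or
precompact (totally bounded in the group uniformity). -/
theorem stmt13 {G : Type} [Group G] [TopologicalSpace G] [IsTopologicalGroup G] [PolishSpace G]
    (hna : (nhds (1 : G)).HasBasis (fun U : Subgroup G => IsOpen (U : Set G))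
      (fun U : Subgroup G => (U : Set G)))
    (g : G) :
    DiscreteTopology (Subgroup.zpowers g) ∨
      @TotallyBounded G (IsTopologicalGroup.rightUniformSpace G)
        (Subgroup.zpowers g : Set G) :=
  stmt13_general hna g
end
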